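/- The tree mover's distance TMD_w^L(G_a, G_b) := OT_{TD_w}(ρ(𝒯_{G_a}^L, 𝒯_{G_b}^L)) is a pseudometric on finite attributed graphs for every finite depth L > 0: it vanishes on equal graphs, is symmetric, and satisfies the triangle inequality. -/

import Mathlib

open scoped BigOperators


noncomputable section

/-- Unnormalized optimal transport between equal-cardinality multisets (represented
as lists): the minimum over bijective matchings of the summed ground costs. -/
noncomputable def listOT {α : Type*} (d : α → α → ℝ) (X Y : List α) : ℝ :=
  sInf {c : ℝ | ∃ Y' : List α, Y.Perm Y' ∧ c = (List.zipWith d X Y').sum}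

/-- Blank augmentation `ρ`: pad the smaller multiset with copies of the blank
element `b` so that both multisets have equal cardinality. -/
def pad {α : Type*} (b : α) (X Y : List α) : List α × List α :=
  (X ++ List.replicate (Y.length - X.length) b,
   Y ++ List.replicate (X.length - Y.length) b)

/-- Blank-augmented unnormalized optimal transport `OT_d(ρ(X, Y))`. -/
noncomputable def otPad {α : Type*} (d : α → α → ℝ) (b : α) (X Y : List α) : ℝ :=
  listOT d (pad b X Y).1 (pad b X Y).2

/-- Rooted trees with node features in `ℝ^p`; children are recorded as a list
(representing the multiset of child subtrees). -/
inductive RTree (p : ℕ) : Type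
  | node : EuclideanSpace ℝ (Fin p) → List (RTree p) → RTree p

namespace RTree

variable {p : ℕ}

/-- The blank tree: a single node with zero feature vector and no children. -/
def blank : RTree p := node 0 []

mutual
  /-- Depth of a rooted tree (a single node has depth 1). -/
  def depth : RTree p → ℕ
    | node _ cs => 1 + depthList cs
  /-- Maximal depth of a list of trees. -/
  def depthList : List (RTree p) → ℕ
    | [] => 0
    | t :: ts => max (depth t) (depthList ts)
end

/-- Tree distance with recursion fuel: `tdAux w n` computes the hierarchical-OT
tree distance `TD_w` correctly whenever `n` is at least the maximal depth. -/
noncomputable def tdAux (w : ℕ → ℝ) : ℕ → RTree p → RTree p → ℝ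
  | 0, _, _ => 0
  | n + 1, node x cs, node y ds =>
      ‖x - y‖ +
        (if 1 < max (node x cs).depth (node y ds).depth then
          w (max (node x cs).depth (node y ds).depth) * otPad (tdAux w n) blank cs ds
        else 0)

/-- The tree distance `TD_w`: distance of root features, plus `w(L)` times the
blank-augmented unnormalized OT between the multisets of child subtrees (with
`TD_w` as the recursive ground cost), `L` being the maximum depth. -/
noncomputable def TD (w : ℕ → ℝ) (Ta Tb : RTree p) : ℝ :=
  tdAux w (max Ta.depth Tb.depth) Ta Tb

/-- Number of nodes at a level of the tree (level `0` is the root, so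
`Width_l(T) = widthAt T (l-1)` in 1-indexed level notation). -/
def widthAt : RTree p → ℕ → ℕ
  | _, 0 => 1
  | node _ cs, l + 1 => (cs.map (fun c => widthAt c l)).sum
termination_by t l => l

/-- Every node feature in the tree is nonzero. -/
inductive NoZero : RTree p → Prop
  | node {x : EuclideanSpace ℝ (Fin p)} {cs : List (RTree p)} :
      x ≠ 0 → (∀ t ∈ cs, NoZero t) → NoZero (RTree.node x cs)

/-- Equivalence of rooted labelled trees up to reordering of children (fuel
version). -/
def equivAux : ℕ → RTree p → RTree p → Prop
  | 0, _, _ => True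
  | n + 1, node x cs, node y ds =>
      x = y ∧ ∃ ds' : List (RTree p), ds.Perm ds' ∧ List.Forall₂ (equivAux n) cs ds'

/-- Two rooted labelled trees are isomorphic: equal roots and children match up
to a bijection level by level. -/
def Equiv' (Ta Tb : RTree p) : Prop := equivAux (max Ta.depth Tb.depth) Ta Tb

end RTree

/-- Depth-`(k+1)` computation tree of node `v`: `compTree G x 0 v` is the single
node `v` with its feature, and the level-`(k+1)` tree attaches the depth-`k`
computation trees of the neighbors of `v`. -/
noncomputable def compTree {V : Type*} [Fintype V] {p : ℕ} (G : SimpleGraph V)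
    [DecidableRel G.Adj] (x : V → EuclideanSpace ℝ (Fin p)) : ℕ → V → RTree p
  | 0, v => RTree.node (x v) []
  | k + 1, v => RTree.node (x v) (((G.neighborFinset v).val.toList).map (compTree G x k))

/-- Tree Mover's Distance `TMD_w^L`: blank-augmented unnormalized OT between the
multisets of depth-`L` computation trees of the two attributed graphs, with the
hierarchical tree distance `TD_w` as ground cost. -/
noncomputable def TMD {Va Vb : Type*} [Fintype Va] [Fintype Vb] {p : ℕ}
    (w : ℕ → ℝ) (L : ℕ)
    (Ga : SimpleGraph Va) [DecidableRel Ga.Adj] (xa : Va → EuclideanSpace ℝ (Fin p))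
    (Gb : SimpleGraph Vb) [DecidableRel Gb.Adj] (xb : Vb → EuclideanSpace ℝ (Fin p)) : ℝ :=
  otPad (RTree.TD w) RTree.blank
    ((Finset.univ.val.toList).map (compTree Ga xa (L - 1)))
    ((Finset.univ.val.toList).map (compTree Gb xb (L - 1)))


/-!
`TD_w` weights the OT between the children of a pair by `w` of the depth of the pair, so on
arbitrary trees it need not be a pseudometric. Computation trees of depth `L`, however, are
perfect of height `L` or single nodes, and on such trees `TD_w` agrees with `levelTD`, which
weights level `k` by `w k` whatever the pair. By induction on the level, `levelTD` is a
pseudometric, because blank-augmented unnormalized OT over a pseudometric ground cost is again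
one: padding both sides with further blanks does not change the cost (a blank–blank pair can be
dropped, and pairs `(x, b)`, `(b, y)` merged into `(x, y)` by the triangle inequality), so three
multisets can be padded to a common length, where optimal matchings compose.
-/

open List

structure IsPseudoMetric {α : Type*} (d : α → α → ℝ) : Prop where
  dist_self : ∀ a, d a a = 0
  comm : ∀ a b, d a b = d b a
  triangle : ∀ a b c, d a c ≤ d a b + d b c

theorem IsPseudoMetric.nonneg {α : Type*} {d : α → α → ℝ} (hd : IsPseudoMetric d)
    (a b : α) : 0 ≤ d a b := by
  have h := hd.triangle a b a
  rw [hd.dist_self, hd.comm b a] at h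
  linarith

theorem List.exists_perm_map_eq {α β : Type*} (f : β → α) {l : List β} {m : List α}
    (h : (l.map f).Perm m) : ∃ l', l.Perm l' ∧ l'.map f = m := by
  classical
  induction m generalizing l with
  | nil => exact ⟨l, .refl l, h.eq_nil⟩
  | cons a m ih =>
    obtain ⟨b, hb, rfl⟩ := mem_map.mp (h.symm.subset mem_cons_self)
    have hl : l.Perm (b :: l.erase b) := perm_cons_erase hb
    obtain ⟨l', hl', hm⟩ := ih ((hl.map f).symm.trans h).cons_inv
    exact ⟨b :: l', hl.trans (hl'.cons b), by simp [hm]⟩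

theorem List.sum_zipWith_le_add {α : Type*} {d : α → α → ℝ}
    (hd : ∀ a b c, d a c ≤ d a b + d b c) :
    ∀ {X Y Z : List α}, X.length = Y.length → Y.length = Z.length →
      (zipWith d X Z).sum ≤ (zipWith d X Y).sum + (zipWith d Y Z).sum
  | [], [], [], _, _ => by simp
  | x :: X, y :: Y, z :: Z, hXY, hYZ => by
    simp only [zipWith_cons_cons, sum_cons]
    linarith [hd x y z, sum_zipWith_le_add hd (X := X) (Y := Y) (Z := Z) (by simpa using hXY)
      (by simpa using hYZ)]

section ListOT

variable {α : Type*} (d : α → α → ℝ)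

def matchingCost (P : List (α × α)) : ℝ := (P.map (Function.uncurry d)).sum

theorem finite_setOf_listOT_costs (X Y : List α) :
    {c : ℝ | ∃ Y' : List α, Y.Perm Y' ∧ c = (zipWith d X Y').sum}.Finite := by
  refine ((Y.permutations.finite_toSet).image fun Y' => (zipWith d X Y').sum).subset ?_
  rintro c ⟨Y', hY', rfl⟩
  exact ⟨Y', mem_permutations.mpr hY'.symm, rfl⟩

theorem exists_perm_listOT_eq_sum (X Y : List α) :
    ∃ Y', Y.Perm Y' ∧ listOT d X Y = (zipWith d X Y').sum := by
  have hne : {c : ℝ | ∃ Y', Y.Perm Y' ∧ c = (zipWith d X Y').sum}.Nonempty :=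
    ⟨_, Y, .refl Y, rfl⟩
  exact hne.csInf_mem (finite_setOf_listOT_costs d X Y)

variable {d} {X Y : List α}

theorem matchingCost_zip (X Y : List α) : matchingCost d (X.zip Y) = (zipWith d X Y).sum := by
  rw [matchingCost, map_uncurry_zip_eq_zipWith]

@[simp] theorem matchingCost_cons (q : α × α) (P : List (α × α)) :
    matchingCost d (q :: P) = d q.1 q.2 + matchingCost d P :=
  sum_cons

theorem matchingCost_eq_sum_zipWith (P : List (α × α)) :
    matchingCost d P = (zipWith d (P.map Prod.fst) (P.map Prod.snd)).sum := by
  rw [← matchingCost_zip, ← unzip_fst, ← unzip_snd, zip_unzip]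

theorem matchingCost_perm {P Q : List (α × α)} (h : P.Perm Q) :
    matchingCost d P = matchingCost d Q :=
  (h.map _).sum_eq

theorem listOT_le_sum {Y' : List α} (h : Y.Perm Y') : listOT d X Y ≤ (zipWith d X Y').sum :=
  csInf_le (finite_setOf_listOT_costs d X Y).bddBelow ⟨Y', h, rfl⟩

theorem listOT_congr {d' : α → α → ℝ} (h : ∀ a ∈ X, ∀ c ∈ Y, d a c = d' a c) :
    listOT d X Y = listOT d' X Y := by
  have key : ∀ Y', Y.Perm Y' → zipWith d X Y' = zipWith d' X Y' := fun Y' hY' => by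
    rw [← map_uncurry_zip_eq_zipWith, ← map_uncurry_zip_eq_zipWith]
    exact map_congr_left fun q hq =>
      h q.1 (of_mem_zip hq).1 q.2 (hY'.symm.subset (of_mem_zip hq).2)
  unfold listOT
  congr 1
  ext c
  exact exists_congr fun Y' => and_congr_right fun hY' => by rw [key Y' hY']

theorem listOT_nil_left (Y : List α) : listOT d [] Y = 0 := by
  obtain ⟨Y', -, h⟩ := exists_perm_listOT_eq_sum d [] Y
  simpa using h

theorem listOT_le_matchingCost {P : List (α × α)} (hX : (P.map Prod.fst).Perm X)
    (hY : (P.map Prod.snd).Perm Y) : listOT d X Y ≤ matchingCost d P := by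
  obtain ⟨P', hP', rfl⟩ := exists_perm_map_eq Prod.fst hX
  rw [matchingCost_perm hP', matchingCost_eq_sum_zipWith]
  exact listOT_le_sum ((hP'.map Prod.snd).symm.trans hY).symm

theorem exists_matchingCost_eq_listOT (hlen : X.length = Y.length) :
    ∃ P : List (α × α), P.map Prod.fst = X ∧ (P.map Prod.snd).Perm Y ∧
      matchingCost d P = listOT d X Y := by
  obtain ⟨Y', hY', hOT⟩ := exists_perm_listOT_eq_sum d X Y
  have hl : X.length = Y'.length := hlen.trans hY'.length_eq
  exact ⟨X.zip Y', map_fst_zip hl.le, (map_snd_zip hl.ge).symm ▸ hY'.symm,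
    by rw [matchingCost_zip, hOT]⟩

theorem listOT_le_of_perm {X' Y' : List α} (hlen : X.length = Y.length) (hX : X.Perm X')
    (hY : Y.Perm Y') : listOT d X' Y' ≤ listOT d X Y := by
  obtain ⟨P, rfl, hPY, hP⟩ := exists_matchingCost_eq_listOT (d := d) hlen
  exact hP ▸ listOT_le_matchingCost hX (hPY.trans hY)

theorem listOT_perm {X' Y' : List α} (hlen : X.length = Y.length) (hX : X.Perm X')
    (hY : Y.Perm Y') : listOT d X Y = listOT d X' Y' :=
  le_antisymm (listOT_le_of_perm (by rw [← hX.length_eq, ← hY.length_eq, hlen]) hX.symm hY.symm)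
    (listOT_le_of_perm hlen hX hY)

theorem listOT_nonneg (hd : IsPseudoMetric d) (X Y : List α) : 0 ≤ listOT d X Y := by
  obtain ⟨Y', -, h⟩ := exists_perm_listOT_eq_sum d X Y
  rw [h, ← map_uncurry_zip_eq_zipWith]
  exact sum_nonneg fun c hc => by
    obtain ⟨q, -, rfl⟩ := mem_map.mp hc
    exact hd.nonneg q.1 q.2

theorem listOT_self (hd : IsPseudoMetric d) (X : List α) : listOT d X X = 0 := by
  refine le_antisymm ?_ (listOT_nonneg hd X X)
  calc listOT d X X ≤ (zipWith d X X).sum := listOT_le_sum (.refl X)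
    _ = 0 := by simp [zipWith_self, hd.dist_self]

theorem listOT_comm_le (hd : IsPseudoMetric d) (hlen : X.length = Y.length) :
    listOT d Y X ≤ listOT d X Y := by
  obtain ⟨P, rfl, hPY, hP⟩ := exists_matchingCost_eq_listOT (d := d) hlen
  calc listOT d Y (P.map Prod.fst)
      ≤ matchingCost d (P.map Prod.swap) :=
        listOT_le_matchingCost (by simpa [Function.comp_def] using hPY)
          (by simp [Function.comp_def])
    _ = matchingCost d P := by
      simp only [matchingCost, map_map]
      exact congrArg sum (map_congr_left fun q _ => hd.comm q.2 q.1)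
    _ = _ := hP

theorem listOT_comm (hd : IsPseudoMetric d) (hlen : X.length = Y.length) :
    listOT d X Y = listOT d Y X :=
  le_antisymm (listOT_comm_le hd hlen.symm) (listOT_comm_le hd hlen)

theorem listOT_triangle (hd : IsPseudoMetric d) {Z : List α} (hXY : X.length = Y.length)
    (hYZ : Y.length = Z.length) :
    listOT d X Z ≤ listOT d X Y + listOT d Y Z := by
  obtain ⟨Y', hY', hXY'⟩ := exists_perm_listOT_eq_sum d X Y
  obtain ⟨Z', hZ', hY'Z'⟩ := exists_perm_listOT_eq_sum d Y' Z
  calc listOT d X Z ≤ (zipWith d X Z').sum := listOT_le_sum hZ'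
    _ ≤ (zipWith d X Y').sum + (zipWith d Y' Z').sum :=
      sum_zipWith_le_add hd.triangle (hXY.trans hY'.length_eq)
        (hY'.length_eq.symm.trans (hYZ.trans hZ'.length_eq))
    _ = listOT d X Y + listOT d Y Z := by
      rw [← hXY', ← hY'Z', listOT_perm hYZ hY' (.refl Z)]

/-- If `y ≠ b`, the pair `(b, y)` and the pair `(x, b)` of `P` are merged into `(x, y)`, which
costs no more by the triangle inequality through `b`. -/
theorem listOT_le_add_matchingCost (hd : IsPseudoMetric d) {b y : α} {P : List (α × α)}
    (hX : (P.map Prod.fst).Perm X) (hY : (y :: P.map Prod.snd).Perm (b :: Y)) :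
    listOT d X Y ≤ d b y + matchingCost d P := by
  classical
  by_cases hyb : y = b
  · subst hyb
    rw [hd.dist_self, zero_add]
    exact listOT_le_matchingCost hX hY.cons_inv
  obtain ⟨q, hq, hqb⟩ : ∃ q ∈ P, q.2 = b := by
    simpa [Ne.symm hyb] using hY.symm.subset mem_cons_self
  have hP : P.Perm (q :: P.erase q) := perm_cons_erase hq
  have hfst : (((q.1, y) :: P.erase q).map Prod.fst).Perm X := by
    simpa using (hP.map Prod.fst).symm.trans hX
  have hsnd : (((q.1, y) :: P.erase q).map Prod.snd).Perm Y := by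
    have h := ((hP.map Prod.snd).cons y).symm.trans hY
    rw [map_cons, hqb] at h
    simpa using ((Perm.swap y b _).trans h).cons_inv
  calc listOT d X Y ≤ d q.1 y + matchingCost d (P.erase q) := by
        simpa using listOT_le_matchingCost hfst hsnd
    _ ≤ d b y + (d q.1 q.2 + matchingCost d (P.erase q)) := by
        rw [hqb]; linarith [hd.triangle q.1 b y]
    _ = d b y + matchingCost d P := by
        rw [matchingCost_perm hP, matchingCost_cons]

theorem listOT_cons_cons_self (hd : IsPseudoMetric d) (hlen : X.length = Y.length) (b : α) :
    listOT d (b :: X) (b :: Y) = listOT d X Y := by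
  refine le_antisymm ?_ ?_
  · obtain ⟨Y', hY', h⟩ := exists_perm_listOT_eq_sum d X Y
    calc listOT d (b :: X) (b :: Y) ≤ (zipWith d (b :: X) (b :: Y')).sum :=
          listOT_le_sum (hY'.cons b)
      _ = listOT d X Y := by simp [hd.dist_self, h]
  · obtain ⟨P, hPX, hPY, hP⟩ :=
      exists_matchingCost_eq_listOT (d := d) (X := b :: X) (Y := b :: Y) (by simp [hlen])
    rcases P with _ | ⟨⟨b', y⟩, P⟩
    · simp at hPX
    simp only [map_cons, cons.injEq] at hPX hPY
    obtain ⟨rfl, rfl⟩ := hPX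
    calc listOT d (P.map Prod.fst) Y ≤ d b' y + matchingCost d P :=
          listOT_le_add_matchingCost hd (.refl _) hPY
      _ = _ := by simpa using hP

theorem listOT_append_replicate (hd : IsPseudoMetric d) (hlen : X.length = Y.length) (b : α)
    (k : ℕ) :
    listOT d (X ++ replicate k b) (Y ++ replicate k b) = listOT d X Y := by
  rw [listOT_perm (X := X ++ replicate k b) (Y := Y ++ replicate k b) (by simp [hlen])
    perm_append_comm perm_append_comm]
  induction k with
  | zero => simp
  | succ k ih =>
    rw [replicate_succ, cons_append, cons_append, listOT_cons_cons_self hd (by simp [hlen]), ih]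

end ListOT

section OTPad

variable {α : Type*} {d : α → α → ℝ}

theorem List.mem_cons_of_mem_append_replicate {a b : α} {X : List α} {k : ℕ}
    (h : a ∈ X ++ replicate k b) : a ∈ b :: X := by
  rcases mem_append.mp h with h | h
  · exact mem_cons_of_mem b h
  · exact eq_of_mem_replicate h ▸ mem_cons_self

theorem otPad_congr {d' : α → α → ℝ} {b : α} {X Y : List α}
    (h : ∀ a ∈ b :: X, ∀ c ∈ b :: Y, d a c = d' a c) : otPad d b X Y = otPad d' b X Y :=
  listOT_congr fun a ha c hc =>
    h a (mem_cons_of_mem_append_replicate ha) c (mem_cons_of_mem_append_replicate hc)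

theorem otPad_eq_listOT_of_length_le (hd : IsPseudoMetric d) (b : α) {M : ℕ} {X Y : List α}
    (hX : X.length ≤ M) (hY : Y.length ≤ M) :
    otPad d b X Y =
      listOT d (X ++ replicate (M - X.length) b) (Y ++ replicate (M - Y.length) b) := by
  have hX' : X ++ replicate (M - X.length) b =
      (pad b X Y).1 ++ replicate (M - max X.length Y.length) b := by
    simp only [pad, append_assoc, ← replicate_add]
    congr 2
    omega
  have hY' : Y ++ replicate (M - Y.length) b =
      (pad b X Y).2 ++ replicate (M - max X.length Y.length) b := by
    simp only [pad, append_assoc, ← replicate_add]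
    congr 2
    omega
  have hlen : (pad b X Y).1.length = (pad b X Y).2.length := by
    simp only [pad, length_append, length_replicate]
    omega
  rw [hX', hY', listOT_append_replicate hd hlen]
  rfl

theorem IsPseudoMetric.otPad (hd : IsPseudoMetric d) (b : α) : IsPseudoMetric (otPad d b) where
  dist_self X := by simpa [_root_.otPad, pad] using listOT_self hd X
  comm X Y := listOT_comm hd (by simp only [pad, length_append, length_replicate]; omega)
  triangle X Y Z := by
    have hX := le_max_left X.length Y.length
    have hY := le_max_right X.length Y.length
    have hXY := le_max_left (max X.length Y.length) Z.length
    have hZ := le_max_right (max X.length Y.length) Z.length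
    rw [otPad_eq_listOT_of_length_le hd b (hX.trans hXY) hZ,
      otPad_eq_listOT_of_length_le hd b (hX.trans hXY) (hY.trans hXY),
      otPad_eq_listOT_of_length_le hd b (hY.trans hXY) hZ]
    exact listOT_triangle hd (by simp) (by simp)

end OTPad

namespace RTree

variable {p : ℕ}

/-- `TD_w` with the weight of each level fixed by its height `k` in the ambient tree rather than
by the depth of the compared pair. -/
noncomputable def levelTD (w : ℕ → ℝ) : ℕ → RTree p → RTree p → ℝ
  | 0, _, _ => 0
  | k + 1, node x cs, node y ds => ‖x - y‖ + w (k + 1) * otPad (levelTD w k) blank cs ds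

theorem isPseudoMetric_levelTD {w : ℕ → ℝ} (hw : ∀ l, 0 ≤ w l) :
    ∀ k, IsPseudoMetric (levelTD (p := p) w k)
  | 0 => ⟨fun _ => rfl, fun _ _ => rfl, fun _ _ _ => by simp [levelTD]⟩
  | k + 1 => by
    have hk := (isPseudoMetric_levelTD hw k).otPad blank
    refine ⟨?_, ?_, ?_⟩
    · rintro ⟨x, cs⟩
      simp [levelTD, hk.dist_self]
    · rintro ⟨x, cs⟩ ⟨y, ds⟩
      simp only [levelTD]
      rw [norm_sub_rev, hk.comm]
    · rintro ⟨x, cs⟩ ⟨y, ds⟩ ⟨z, es⟩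
      simp only [levelTD]
      linarith [norm_sub_le_norm_sub_add_norm_sub x y z,
        mul_le_mul_of_nonneg_left (hk.triangle cs ds es) (hw (k + 1))]

inductive UniformDepth : ℕ → RTree p → Prop
  | leaf (x : EuclideanSpace ℝ (Fin p)) : UniformDepth 1 (node x [])
  | node (x : EuclideanSpace ℝ (Fin p)) {cs : List (RTree p)} {k : ℕ} (hne : cs ≠ [])
      (h : ∀ c ∈ cs, UniformDepth k c) : UniformDepth (k + 1) (node x cs)

/-- The shape of a computation tree of depth `k + 1`: perfect of height `k + 1`, or a single
node (for an isolated vertex). -/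
def ChildrenUniformDepth (k : ℕ) : RTree p → Prop
  | node _ cs => ∀ c ∈ cs, UniformDepth k c

theorem UniformDepth.pos {k : ℕ} {t : RTree p} (h : UniformDepth k t) : 0 < k := by
  cases h <;> omega

theorem depthList_eq_of_forall {k : ℕ} {cs : List (RTree p)} (hne : cs ≠ [])
    (h : ∀ c ∈ cs, c.depth = k) : depthList cs = k := by
  induction cs with
  | nil => exact absurd rfl hne
  | cons c cs ih =>
    rcases eq_or_ne cs [] with rfl | hcs
    · simp [depthList, h c mem_cons_self]
    · rw [depthList, h c mem_cons_self, ih hcs fun t ht => h t (mem_cons_of_mem c ht), max_self]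

theorem UniformDepth.depth_eq {k : ℕ} {t : RTree p} (h : UniformDepth k t) : t.depth = k := by
  induction h with
  | leaf x => simp [depth, depthList]
  | node x hne _ ih =>
    rw [depth, depthList_eq_of_forall hne ih]
    omega

theorem UniformDepth.childrenUniformDepth {k : ℕ} {t : RTree p} (h : UniformDepth (k + 1) t) :
    ChildrenUniformDepth k t := by
  cases h with
  | leaf x => exact fun c hc => absurd hc not_mem_nil
  | node x _ h => exact h

theorem childrenUniformDepth_of_mem_blank_cons {k : ℕ} {a : RTree p} {l : List (RTree p)}
    (h : ∀ t ∈ l, ChildrenUniformDepth k t) (ha : a ∈ blank :: l) :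
    ChildrenUniformDepth k a := by
  rcases mem_cons.mp ha with rfl | ha
  · exact fun c hc => absurd hc not_mem_nil
  · exact h a ha

theorem depth_node_nil (x : EuclideanSpace ℝ (Fin p)) : (node x []).depth = 1 := by
  simp [depth, depthList]

theorem depth_le_of_childrenUniformDepth {k : ℕ} {t : RTree p} (h : ChildrenUniformDepth k t) :
    t.depth ≤ k + 1 := by
  obtain ⟨x, cs⟩ := t
  rcases eq_or_ne cs [] with rfl | hne
  · simp [depth_node_nil]
  · rw [depth, depthList_eq_of_forall hne fun c hc => (h c hc).depth_eq]
    omega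

theorem depth_eq_of_childrenUniformDepth {k : ℕ} {x : EuclideanSpace ℝ (Fin p)}
    {cs : List (RTree p)} (h : ChildrenUniformDepth k (node x cs)) (hne : cs ≠ []) :
    (node x cs).depth = k + 1 := by
  rw [depth, depthList_eq_of_forall hne fun c hc => (h c hc).depth_eq]
  omega

theorem tdAux_node_nil (w : ℕ → ℝ) {n : ℕ} (hn : 1 ≤ n) (x y : EuclideanSpace ℝ (Fin p)) :
    tdAux w n (node x []) (node y []) = ‖x - y‖ := by
  obtain ⟨n, rfl⟩ : ∃ m, n = m + 1 := ⟨n - 1, by omega⟩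
  simp [tdAux, depth_node_nil]

theorem levelTD_node_nil (w : ℕ → ℝ) (k : ℕ) (x y : EuclideanSpace ℝ (Fin p)) :
    levelTD w (k + 1) (node x []) (node y []) = ‖x - y‖ := by
  simp [levelTD, otPad, pad, listOT_nil_left]

/-- On trees of computation-tree shape, the weight `w (max depth)` used by `TD_w` at the root of
a pair is the level weight `w (k + 1)`, unless both roots are leaves, where no weight enters. -/
theorem tdAux_eq_levelTD (w : ℕ → ℝ) (k : ℕ) :
    ∀ (n : ℕ) {A B : RTree p}, ChildrenUniformDepth k A → ChildrenUniformDepth k B →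
      max A.depth B.depth ≤ n → tdAux w n A B = levelTD w (k + 1) A B := by
  induction k with
  | zero =>
    rintro n ⟨x, cs⟩ ⟨y, ds⟩ hA hB hn
    obtain rfl : cs = [] := eq_nil_iff_forall_not_mem.mpr fun c hc => (hA c hc).pos.ne rfl
    obtain rfl : ds = [] := eq_nil_iff_forall_not_mem.mpr fun c hc => (hB c hc).pos.ne rfl
    rw [tdAux_node_nil w (by simpa [depth_node_nil] using hn), levelTD_node_nil]
  | succ k ih =>
    rintro n ⟨x, cs⟩ ⟨y, ds⟩ hA hB hn
    have hAd := depth_le_of_childrenUniformDepth hA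
    have hBd := depth_le_of_childrenUniformDepth hB
    by_cases hleaf : cs = [] ∧ ds = []
    · obtain ⟨rfl, rfl⟩ := hleaf
      rw [tdAux_node_nil w (by simpa [depth_node_nil] using hn), levelTD_node_nil]
    have hmax : max (node x cs).depth (node y ds).depth = k + 2 := by
      rcases not_and_or.mp hleaf with hne | hne
      · have := depth_eq_of_childrenUniformDepth hA hne; omega
      · have := depth_eq_of_childrenUniformDepth hB hne; omega
    obtain ⟨m, rfl⟩ : ∃ m, n = m + 1 := ⟨n - 1, by omega⟩
    rw [tdAux, levelTD, hmax, if_pos (by omega)]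
    congr 2
    refine otPad_congr fun a ha c hc => ?_
    have ha' := childrenUniformDepth_of_mem_blank_cons
      (fun t ht => (hA t ht).childrenUniformDepth) ha
    have hc' := childrenUniformDepth_of_mem_blank_cons
      (fun t ht => (hB t ht).childrenUniformDepth) hc
    exact ih m ha' hc' (by
      have := depth_le_of_childrenUniformDepth ha'
      have := depth_le_of_childrenUniformDepth hc'
      omega)

theorem TD_eq_levelTD (w : ℕ → ℝ) {k : ℕ} {A B : RTree p} (hA : ChildrenUniformDepth k A)
    (hB : ChildrenUniformDepth k B) : TD w A B = levelTD w (k + 1) A B :=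
  tdAux_eq_levelTD w k _ hA hB le_rfl

end RTree

section CompTree

open RTree

variable {V : Type*} [Fintype V] {p : ℕ} (G : SimpleGraph V) [DecidableRel G.Adj]
  (x : V → EuclideanSpace ℝ (Fin p))

theorem mem_compTree_children {k : ℕ} {v : V} {c : RTree p}
    (hc : c ∈ (G.neighborFinset v).val.toList.map (compTree G x k)) :
    ∃ u, G.Adj v u ∧ c = compTree G x k u := by
  obtain ⟨u, hu, rfl⟩ := mem_map.mp hc
  exact ⟨u, (G.mem_neighborFinset v u).mp (Multiset.mem_toList.mp hu), rfl⟩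

theorem uniformDepth_compTree :
    ∀ (k : ℕ) {v : V}, (G.neighborFinset v).Nonempty → UniformDepth (k + 1) (compTree G x k v)
  | 0, v, _ => .leaf (x v)
  | k + 1, v, hv => .node (x v) (by simpa using hv.ne_empty) fun c hc => by
    obtain ⟨u, huv, rfl⟩ := mem_compTree_children G x hc
    exact uniformDepth_compTree k ⟨v, (G.mem_neighborFinset u v).mpr huv.symm⟩

theorem childrenUniformDepth_compTree :
    ∀ (k : ℕ) (v : V), ChildrenUniformDepth k (compTree G x k v)
  | 0, _ => fun c hc => absurd hc not_mem_nil
  | k + 1, v => fun c hc => by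
    obtain ⟨u, huv, rfl⟩ := mem_compTree_children G x hc
    exact uniformDepth_compTree G x k ⟨v, (G.mem_neighborFinset u v).mpr huv.symm⟩

theorem childrenUniformDepth_of_mem_blank_cons_compTrees {k : ℕ} {A : RTree p}
    (hA : A ∈ blank :: (Finset.univ.val.toList).map (compTree G x k)) :
    ChildrenUniformDepth k A := by
  refine childrenUniformDepth_of_mem_blank_cons (fun t ht => ?_) hA
  obtain ⟨v, -, rfl⟩ := mem_map.mp ht
  exact childrenUniformDepth_compTree G x k v

end CompTree

theorem TMD_eq_otPad_levelTD {Va Vb : Type*} [Fintype Va] [Fintype Vb] {p : ℕ}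
    (w : ℕ → ℝ) (L : ℕ)
    (Ga : SimpleGraph Va) [DecidableRel Ga.Adj] (xa : Va → EuclideanSpace ℝ (Fin p))
    (Gb : SimpleGraph Vb) [DecidableRel Gb.Adj] (xb : Vb → EuclideanSpace ℝ (Fin p)) :
    TMD w L Ga xa Gb xb = otPad (RTree.levelTD w (L - 1 + 1)) RTree.blank
      ((Finset.univ.val.toList).map (compTree Ga xa (L - 1)))
      ((Finset.univ.val.toList).map (compTree Gb xb (L - 1))) :=
  otPad_congr fun _ hA _ hB => RTree.TD_eq_levelTD w
    (childrenUniformDepth_of_mem_blank_cons_compTrees Ga xa hA)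
    (childrenUniformDepth_of_mem_blank_cons_compTrees Gb xb hB)

/-- The Tree Mover's Distance `TMD_w^L` is a pseudometric on finite attributed
graphs for every finite depth `L > 0`: it vanishes on equal graphs, is
symmetric, and satisfies the triangle inequality. -/
theorem TMD_pseudometric {Va Vb Vc : Type*} [Fintype Va] [Fintype Vb] [Fintype Vc]
    {p : ℕ} (w : ℕ → ℝ) (hw : ∀ l, 0 < w l) (L : ℕ) (hL : 0 < L)
    (Ga : SimpleGraph Va) [DecidableRel Ga.Adj] (xa : Va → EuclideanSpace ℝ (Fin p))
    (Gb : SimpleGraph Vb) [DecidableRel Gb.Adj] (xb : Vb → EuclideanSpace ℝ (Fin p))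
    (Gc : SimpleGraph Vc) [DecidableRel Gc.Adj] (xc : Vc → EuclideanSpace ℝ (Fin p)) :
    TMD w L Ga xa Ga xa = 0 ∧
    TMD w L Ga xa Gb xb = TMD w L Gb xb Ga xa ∧
    TMD w L Ga xa Gb xb ≤ TMD w L Ga xa Gc xc + TMD w L Gc xc Gb xb := by
  have hTD := (RTree.isPseudoMetric_levelTD (p := p) (fun l => (hw l).le) (L - 1 + 1)).otPad
    RTree.blank
  simp only [TMD_eq_otPad_levelTD]
  exact ⟨hTD.dist_self _, hTD.comm _ _, hTD.triangle _ _ _⟩
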